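/- Let Ω ⊆ ℝⁿ and 0 < δ₁ < δ₂ ≤ n. Then for any function f : Ω → [−∞, ∞], ( ∫_Ω |f(x)| dH^{δ₂}_∞ )^{1/δ₂} ≤ (δ₂/δ₁)^{1/δ₂} ( ∫_Ω |f(x)|^{δ₁/δ₂} dH^{δ₁}_∞ )^{1/δ₁}. -/

import Mathlib

/-!
Write `p = δ₂ / δ₁ ≥ 1`, `φ s = H^{δ₁}_∞ {|f| > s}` and `B = ∫ |f|^{1/p} dH^{δ₁}_∞ = ∫₀^∞ φ (u^p) du`.
Comparing sums over the same cover gives `H^{δ₂}_∞ ≤ (H^{δ₁}_∞)^p`, because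
`∑ rᵢ^{δ₂} ≤ (∑ rᵢ^{δ₁})^p`. Since `φ` is decreasing, `s^{1/p} φ s ≤ B`; hence
`φ s ^ p ≤ B^{p-1} s^{1/p-1} φ s`, and the substitution `s = u^p` gives
`∫₀^∞ s^{1/p-1} φ s ds = p B`. Altogether `∫ |f| dH^{δ₂}_∞ ≤ p B^p`.
-/

open Metric Set ENNReal

/-- The δ-dimensional Hausdorff content of a set `E ⊆ ℝⁿ`: the infimum of `∑ rᵢ^δ`
over all countable covers of `E` by open balls `B(xᵢ, rᵢ)`. -/
noncomputable def hContent (n : ℕ) (δ : ℝ) (E : Set (EuclideanSpace ℝ (Fin n))) : ℝ≥0∞ :=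
  ⨅ (c : ℕ → EuclideanSpace ℝ (Fin n)) (r : ℕ → NNReal)
    (_ : E ⊆ ⋃ i, Metric.ball (c i) (r i)), ∑' i, (r i : ℝ≥0∞) ^ δ

/-- The Choquet integral `∫_Ω f dH^δ_∞ = ∫_0^∞ H^δ_∞({x ∈ Ω : f x > t}) dt`. -/
noncomputable def choquet (n : ℕ) (δ : ℝ) (Ω : Set (EuclideanSpace ℝ (Fin n)))
    (f : EuclideanSpace ℝ (Fin n) → ℝ≥0∞) : ℝ≥0∞ :=
  ∫⁻ t in Set.Ioi (0 : ℝ), hContent n δ {x | x ∈ Ω ∧ ENNReal.ofReal t < f x}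

open MeasureTheory

theorem ENNReal.rpow_eq_rpow_sub_one_mul (x : ℝ≥0∞) {p : ℝ} (hp : 1 ≤ p) :
    x ^ p = x ^ (p - 1) * x := by
  conv_lhs => rw [← sub_add_cancel p 1]
  rw [ENNReal.rpow_add_of_nonneg _ _ (by linarith) zero_le_one, rpow_one]

theorem ENNReal.tsum_rpow_le_rpow_tsum (a : ℕ → ℝ≥0∞) {p : ℝ} (hp : 1 ≤ p) :
    ∑' i, a i ^ p ≤ (∑' i, a i) ^ p := by
  set S := ∑' i, a i
  calc ∑' i, a i ^ p ≤ ∑' i, S ^ (p - 1) * a i := by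
        refine ENNReal.tsum_le_tsum fun i => ?_
        rw [ENNReal.rpow_eq_rpow_sub_one_mul _ hp]
        gcongr
        exact ENNReal.le_tsum i
    _ = S ^ p := by rw [ENNReal.tsum_mul_left, ← ENNReal.rpow_eq_rpow_sub_one_mul _ hp]

theorem hContent_mono {n : ℕ} {δ : ℝ} {E F : Set (EuclideanSpace ℝ (Fin n))} (h : E ⊆ F) :
    hContent n δ E ≤ hContent n δ F :=
  iInf_mono fun _ => iInf_mono fun _ => iInf_mono' fun hF => ⟨h.trans hF, le_rfl⟩

theorem hContent_le_rpow {n : ℕ} {δ₁ δ₂ : ℝ} (hδ₁ : 0 < δ₁) (hδ₁₂ : δ₁ ≤ δ₂)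
    (E : Set (EuclideanSpace ℝ (Fin n))) :
    hContent n δ₂ E ≤ hContent n δ₁ E ^ (δ₂ / δ₁) := by
  have hq : 0 < δ₂ / δ₁ := div_pos (hδ₁.trans_le hδ₁₂) hδ₁
  rw [← ENNReal.rpow_inv_le_iff hq]
  refine le_iInf fun c => le_iInf fun r => le_iInf fun hE => ?_
  have hcover : hContent n δ₂ E ≤ ∑' i, (r i : ℝ≥0∞) ^ δ₂ := iInf₂_le_of_le c r (iInf_le _ hE)
  refine (ENNReal.rpow_le_rpow hcover (inv_nonneg.2 hq.le)).trans ?_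
  rw [ENNReal.rpow_inv_le_iff hq]
  have hpow : ∀ i, (r i : ℝ≥0∞) ^ δ₂ = ((r i : ℝ≥0∞) ^ δ₁) ^ (δ₂ / δ₁) := fun i => by
    rw [← ENNReal.rpow_mul, mul_div_cancel₀ _ hδ₁.ne']
  simp only [hpow]
  exact ENNReal.tsum_rpow_le_rpow_tsum _ ((one_le_div hδ₁).2 hδ₁₂)

theorem lintegral_comp_rpow_Ioi_of_pos {p : ℝ} (hp : 0 < p) (g : ℝ → ℝ≥0∞) :
    ∫⁻ x in Ioi 0, ENNReal.ofReal (p * x ^ (p - 1)) * g (x ^ p) = ∫⁻ y in Ioi 0, g y := by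
  have himage : (· ^ p) '' Ioi 0 = Ioi (0 : ℝ) := by
    ext y
    refine ⟨fun ⟨x, hx, hxy⟩ => hxy ▸ Real.rpow_pos_of_pos hx p, fun hy => ?_⟩
    exact ⟨y ^ p⁻¹, Real.rpow_pos_of_pos hy _, Real.rpow_inv_rpow (le_of_lt hy) hp.ne'⟩
  conv_rhs => rw [← himage]
  rw [lintegral_image_eq_lintegral_abs_deriv_mul measurableSet_Ioi
    (fun x hx => (Real.hasDerivAt_rpow_const (Or.inl (ne_of_gt hx))).hasDerivWithinAt)
    ((Real.rpow_left_injOn hp.ne').mono (Ioi_subset_Ici_self (a := (0 : ℝ))))]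
  refine setLIntegral_congr_fun measurableSet_Ioi fun x (hx : 0 < x) => ?_
  rw [abs_of_pos (by positivity)]

theorem lintegral_Ioi_rpow_inv_sub_one_mul {p : ℝ} (hp : 0 < p) (φ : ℝ → ℝ≥0∞) :
    ∫⁻ t in Ioi 0, ENNReal.ofReal (t ^ (p⁻¹ - 1)) * φ t =
      ENNReal.ofReal p * ∫⁻ u in Ioi 0, φ (u ^ p) := by
  rw [← lintegral_comp_rpow_Ioi_of_pos hp, ← lintegral_const_mul' _ _ ofReal_ne_top]
  refine setLIntegral_congr_fun measurableSet_Ioi fun u (hu : 0 < u) => ?_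
  have hcancel : u ^ (p - 1) * (u ^ p) ^ (p⁻¹ - 1) = 1 := by
    rw [← Real.rpow_mul hu.le, ← Real.rpow_add hu, mul_sub, mul_inv_cancel₀ hp.ne']
    simp
  rw [← mul_assoc, ← ENNReal.ofReal_mul (by positivity), mul_assoc, hcancel, mul_one]

theorem AntitoneOn.ofReal_rpow_inv_mul_le_lintegral {φ : ℝ → ℝ≥0∞} (hφ : AntitoneOn φ (Ioi 0))
    {p : ℝ} (hp : 0 < p) {s : ℝ} (hs : 0 < s) :
    ENNReal.ofReal (s ^ p⁻¹) * φ s ≤ ∫⁻ t in Ioi 0, φ (t ^ p) := by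
  calc ENNReal.ofReal (s ^ p⁻¹) * φ s = ∫⁻ _ in Ioo 0 (s ^ p⁻¹), φ s := by
        rw [setLIntegral_const, Real.volume_Ioo, sub_zero, mul_comm]
    _ ≤ ∫⁻ t in Ioo 0 (s ^ p⁻¹), φ (t ^ p) := by
        refine setLIntegral_mono' measurableSet_Ioo fun t ht => ?_
        have hts : t ^ p < s := (Real.lt_rpow_inv_iff_of_pos ht.1.le hs.le hp).1 ht.2
        exact hφ (Real.rpow_pos_of_pos ht.1 p) hs hts.le
    _ ≤ ∫⁻ t in Ioi 0, φ (t ^ p) := lintegral_mono_set Ioo_subset_Ioi_self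

theorem lintegral_Ioi_le_of_le_rpow {φ ψ : ℝ → ℝ≥0∞} (hφ : AntitoneOn φ (Ioi 0)) {p : ℝ}
    (hp : 1 ≤ p) (hψ : ∀ t ∈ Ioi (0 : ℝ), ψ t ≤ φ t ^ p) :
    ∫⁻ t in Ioi 0, ψ t ≤ ENNReal.ofReal p * (∫⁻ u in Ioi 0, φ (u ^ p)) ^ p := by
  have hp0 : 0 < p := zero_lt_one.trans_le hp
  set B := ∫⁻ u in Ioi 0, φ (u ^ p)
  rcases eq_or_ne B ⊤ with hB | hB
  · simp [hB, ENNReal.top_rpow_of_pos hp0, hp0]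
  have hweak (t : ℝ) (ht : 0 < t) : φ t ≤ ENNReal.ofReal (t ^ (-p⁻¹)) * B := by
    calc φ t = ENNReal.ofReal (t ^ (-p⁻¹)) * (ENNReal.ofReal (t ^ p⁻¹) * φ t) := by
          rw [← mul_assoc, ← ENNReal.ofReal_mul (by positivity), ← Real.rpow_add ht]
          simp
      _ ≤ ENNReal.ofReal (t ^ (-p⁻¹)) * B := by
          gcongr
          exact hφ.ofReal_rpow_inv_mul_le_lintegral hp0 ht
  have hpoint (t : ℝ) (ht : 0 < t) :
      ψ t ≤ B ^ (p - 1) * (ENNReal.ofReal (t ^ (p⁻¹ - 1)) * φ t) := by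
    calc ψ t ≤ φ t ^ p := hψ t ht
      _ = φ t ^ (p - 1) * φ t := ENNReal.rpow_eq_rpow_sub_one_mul _ hp
      _ ≤ (ENNReal.ofReal (t ^ (-p⁻¹)) * B) ^ (p - 1) * φ t := by
          gcongr
          exact hweak t ht
      _ = B ^ (p - 1) * (ENNReal.ofReal (t ^ (p⁻¹ - 1)) * φ t) := by
          rw [ENNReal.mul_rpow_of_nonneg _ _ (by linarith),
            ENNReal.ofReal_rpow_of_nonneg (by positivity) (by linarith), ← Real.rpow_mul ht.le,
            show -p⁻¹ * (p - 1) = p⁻¹ - 1 by field_simp; ring]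
          ring
  calc ∫⁻ t in Ioi 0, ψ t
      ≤ ∫⁻ t in Ioi 0, B ^ (p - 1) * (ENNReal.ofReal (t ^ (p⁻¹ - 1)) * φ t) :=
        setLIntegral_mono' measurableSet_Ioi fun t ht => hpoint t ht
    _ = B ^ (p - 1) * (ENNReal.ofReal p * B) := by
        rw [lintegral_const_mul' _ _ (ENNReal.rpow_ne_top_of_nonneg (by linarith) hB),
          lintegral_Ioi_rpow_inv_sub_one_mul hp0]
    _ = ENNReal.ofReal p * B ^ p := by
        rw [mul_left_comm, ← ENNReal.rpow_eq_rpow_sub_one_mul _ hp]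

theorem choquet_rpow (n : ℕ) (δ : ℝ) (Ω : Set (EuclideanSpace ℝ (Fin n)))
    (g : EuclideanSpace ℝ (Fin n) → ℝ≥0∞) {θ : ℝ} (hθ : 0 < θ) :
    choquet n δ Ω (fun x => g x ^ θ) =
      ∫⁻ t in Ioi 0, hContent n δ {x | x ∈ Ω ∧ ENNReal.ofReal (t ^ θ⁻¹) < g x} := by
  refine setLIntegral_congr_fun measurableSet_Ioi fun t ht => ?_
  simp_rw [← ENNReal.ofReal_rpow_of_pos (show 0 < t from ht), ENNReal.rpow_inv_lt_iff hθ]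

theorem choquet_le_ofReal_mul_choquet_rpow {n : ℕ} {δ₁ δ₂ : ℝ} (hδ₁ : 0 < δ₁) (hδ₁₂ : δ₁ ≤ δ₂)
    (Ω : Set (EuclideanSpace ℝ (Fin n))) (g : EuclideanSpace ℝ (Fin n) → ℝ≥0∞) :
    choquet n δ₂ Ω g ≤
      ENNReal.ofReal (δ₂ / δ₁) * choquet n δ₁ Ω (fun x => g x ^ (δ₁ / δ₂)) ^ (δ₂ / δ₁) := by
  rw [choquet_rpow _ _ _ _ (div_pos hδ₁ (hδ₁.trans_le hδ₁₂)), inv_div]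
  refine lintegral_Ioi_le_of_le_rpow ?_ ((one_le_div hδ₁).2 hδ₁₂)
    fun t _ => hContent_le_rpow hδ₁ hδ₁₂ _
  exact fun s _ t _ hst => hContent_mono fun x hx => ⟨hx.1, (ofReal_le_ofReal hst).trans_lt hx.2⟩

theorem choquet_dimension_comparison_general (n : ℕ) (δ₁ δ₂ : ℝ)
    (hδ₁ : 0 < δ₁) (hδ₁₂ : δ₁ < δ₂)
    (Ω : Set (EuclideanSpace ℝ (Fin n))) (f : EuclideanSpace ℝ (Fin n) → EReal) :
    (choquet n δ₂ Ω (fun x => (f x).abs)) ^ (1 / δ₂) ≤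
      ENNReal.ofReal ((δ₂ / δ₁) ^ (1 / δ₂)) *
        (choquet n δ₁ Ω (fun x => (f x).abs ^ (δ₁ / δ₂))) ^ (1 / δ₁) := by
  have hδ₂ : 0 < δ₂ := hδ₁.trans hδ₁₂
  calc (choquet n δ₂ Ω (fun x => (f x).abs)) ^ (1 / δ₂)
      ≤ (ENNReal.ofReal (δ₂ / δ₁) *
          choquet n δ₁ Ω (fun x => (f x).abs ^ (δ₁ / δ₂)) ^ (δ₂ / δ₁)) ^ (1 / δ₂) := by
        gcongr
        exact choquet_le_ofReal_mul_choquet_rpow hδ₁ hδ₁₂.le Ω _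
    _ = _ := by
        rw [ENNReal.mul_rpow_of_nonneg _ _ (by positivity),
          ENNReal.ofReal_rpow_of_pos (by positivity), ← ENNReal.rpow_mul]
        congr 2
        field_simp

/-- Comparison of Choquet integrals over different dimensional Hausdorff contents:
`(∫_Ω |f| dH^{δ₂}_∞)^{1/δ₂} ≤ (δ₂/δ₁)^{1/δ₂} (∫_Ω |f|^{δ₁/δ₂} dH^{δ₁}_∞)^{1/δ₁}`. -/
theorem choquet_dimension_comparison (n : ℕ) (hn : 1 ≤ n) (δ₁ δ₂ : ℝ)
    (hδ₁ : 0 < δ₁) (hδ₁₂ : δ₁ < δ₂) (hδ₂ : δ₂ ≤ n)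
    (Ω : Set (EuclideanSpace ℝ (Fin n))) (f : EuclideanSpace ℝ (Fin n) → EReal) :
    (choquet n δ₂ Ω (fun x => (f x).abs)) ^ (1 / δ₂) ≤
      ENNReal.ofReal ((δ₂ / δ₁) ^ (1 / δ₂)) *
        (choquet n δ₁ Ω (fun x => (f x).abs ^ (δ₁ / δ₂))) ^ (1 / δ₁) :=
  choquet_dimension_comparison_general n δ₁ δ₂ hδ₁ hδ₁₂ Ω f
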